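/- Let C be an abelian category with enough injectives and A the heart category of complexes [A \to B \to C] with first map injective and exact at the middle. If I and J are injective objects of C, then any object of A of the form [D \to I \to J] is injective in A. In particular, for I injective in C, P_I = [0 \to 0 \to I] is injective in A. -/

import Mathlib

open CategoryTheory Limits

namespace ARHeart

variable (C : Type*) [Category C] [Abelian C]

/-- Objects of the heart `𝒜`: complexes `[A ⟶ B ⟶ Z]` in degrees `-2, -1, 0`
with the first map a monomorphism and `Ker g = Im f`. -/
structure Obj : Type _ where
  A : C
  B : C
  Z : C
  f : A ⟶ B
  g : B ⟶ Z
  w : f ≫ g = 0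
  mono : Mono f
  exact : (ShortComplex.mk f g w).Exact

variable {C}

/-- Chain maps between heart objects. -/
@[ext]
structure Hom (V W : Obj C) where
  a : V.A ⟶ W.A
  b : V.B ⟶ W.B
  c : V.Z ⟶ W.Z
  comm₁ : V.f ≫ b = a ≫ W.f
  comm₂ : V.g ≫ c = b ≫ W.g

namespace Hom

variable {U V W : Obj C}

instance : Zero (Hom V W) := ⟨⟨0, 0, 0, by simp, by simp⟩⟩
instance : Add (Hom V W) :=
  ⟨fun φ ψ => ⟨φ.a + ψ.a, φ.b + ψ.b, φ.c + ψ.c,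
    by simp [Preadditive.comp_add, Preadditive.add_comp, φ.comm₁, ψ.comm₁],
    by simp [Preadditive.comp_add, Preadditive.add_comp, φ.comm₂, ψ.comm₂]⟩⟩
instance : Neg (Hom V W) :=
  ⟨fun φ => ⟨-φ.a, -φ.b, -φ.c,
    by simp [φ.comm₁], by simp [φ.comm₂]⟩⟩
instance : Sub (Hom V W) :=
  ⟨fun φ ψ => ⟨φ.a - ψ.a, φ.b - ψ.b, φ.c - ψ.c,
    by simp [Preadditive.comp_sub, Preadditive.sub_comp, φ.comm₁, ψ.comm₁],
    by simp [Preadditive.comp_sub, Preadditive.sub_comp, φ.comm₂, ψ.comm₂]⟩⟩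
instance : SMul ℕ (Hom V W) :=
  ⟨fun n φ => ⟨n • φ.a, n • φ.b, n • φ.c,
    by simp [φ.comm₁], by simp [φ.comm₂]⟩⟩
instance : SMul ℤ (Hom V W) :=
  ⟨fun n φ => ⟨n • φ.a, n • φ.b, n • φ.c,
    by simp [φ.comm₁], by simp [φ.comm₂]⟩⟩

@[simp] lemma add_a (φ ψ : Hom V W) : (φ + ψ).a = φ.a + ψ.a := rfl
@[simp] lemma add_b (φ ψ : Hom V W) : (φ + ψ).b = φ.b + ψ.b := rfl
@[simp] lemma add_c (φ ψ : Hom V W) : (φ + ψ).c = φ.c + ψ.c := rfl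
@[simp] lemma sub_a (φ ψ : Hom V W) : (φ - ψ).a = φ.a - ψ.a := rfl
@[simp] lemma sub_b (φ ψ : Hom V W) : (φ - ψ).b = φ.b - ψ.b := rfl
@[simp] lemma sub_c (φ ψ : Hom V W) : (φ - ψ).c = φ.c - ψ.c := rfl
@[simp] lemma neg_a (φ : Hom V W) : (-φ).a = -φ.a := rfl
@[simp] lemma neg_b (φ : Hom V W) : (-φ).b = -φ.b := rfl
@[simp] lemma neg_c (φ : Hom V W) : (-φ).c = -φ.c := rfl
@[simp] lemma zero_a : (0 : Hom V W).a = 0 := rfl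
@[simp] lemma zero_b : (0 : Hom V W).b = 0 := rfl
@[simp] lemma zero_c : (0 : Hom V W).c = 0 := rfl

instance : AddCommGroup (Hom V W) :=
  Function.Injective.addCommGroup
    (fun φ => (φ.a, φ.b, φ.c))
    (fun φ ψ h => by
      ext <;> simp only [Prod.mk.injEq] at h <;> tauto)
    rfl (fun _ _ => rfl) (fun _ => rfl) (fun _ _ => rfl) (fun _ _ => rfl) (fun _ _ => rfl)

/-- Identity chain map. -/
def id (V : Obj C) : Hom V V := ⟨𝟙 _, 𝟙 _, 𝟙 _, by simp, by simp⟩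

/-- Composition of chain maps. -/
def comp (φ : Hom U V) (ψ : Hom V W) : Hom U W :=
  ⟨φ.a ≫ ψ.a, φ.b ≫ ψ.b, φ.c ≫ ψ.c,
    by rw [← Category.assoc, φ.comm₁, Category.assoc, ψ.comm₁, Category.assoc],
    by rw [← Category.assoc, φ.comm₂, Category.assoc, ψ.comm₂, Category.assoc]⟩

@[simp] lemma comp_a (φ : Hom U V) (ψ : Hom V W) : (φ.comp ψ).a = φ.a ≫ ψ.a := rfl
@[simp] lemma comp_b (φ : Hom U V) (ψ : Hom V W) : (φ.comp ψ).b = φ.b ≫ ψ.b := rfl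
@[simp] lemma comp_c (φ : Hom U V) (ψ : Hom V W) : (φ.comp ψ).c = φ.c ≫ ψ.c := rfl

lemma sub_comp (φ φ' : Hom U V) (ψ : Hom V W) :
    (φ - φ').comp ψ = φ.comp ψ - φ'.comp ψ := by
  ext <;> simp [Preadditive.sub_comp]

lemma comp_sub (φ : Hom U V) (ψ ψ' : Hom V W) :
    φ.comp (ψ - ψ') = φ.comp ψ - φ.comp ψ' := by
  ext <;> simp [Preadditive.comp_sub]

lemma add_comp (φ φ' : Hom U V) (ψ : Hom V W) :
    (φ + φ').comp ψ = φ.comp ψ + φ'.comp ψ := by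
  ext <;> simp [Preadditive.add_comp]

lemma comp_add (φ : Hom U V) (ψ ψ' : Hom V W) :
    φ.comp (ψ + ψ') = φ.comp ψ + φ.comp ψ' := by
  ext <;> simp [Preadditive.comp_add]

end Hom

/-- The subgroup of chain maps homotopic to zero. -/
def nullHomotopic (V W : Obj C) : AddSubgroup (Hom V W) where
  carrier := {χ | ∃ (s₁ : V.B ⟶ W.A) (s₀ : V.Z ⟶ W.B),
    χ.a = V.f ≫ s₁ ∧ χ.b = V.g ≫ s₀ + s₁ ≫ W.f ∧ χ.c = s₀ ≫ W.g}
  add_mem' := by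
    rintro χ χ' ⟨s₁, s₀, h1, h2, h3⟩ ⟨t₁, t₀, h1', h2', h3'⟩
    exact ⟨s₁ + t₁, s₀ + t₀, by
      simp [h1, h1', Preadditive.comp_add], by
      simp only [Hom.add_b, h2, h2', Preadditive.comp_add, Preadditive.add_comp]
      abel, by simp [h3, h3', Preadditive.add_comp]⟩
  zero_mem' := ⟨0, 0, by simp, by simp, by simp⟩
  neg_mem' := by
    rintro χ ⟨s₁, s₀, h1, h2, h3⟩
    exact ⟨-s₁, -s₀, by simp [h1], by simp [h2]; abel, by simp [h3]⟩

lemma comp_null {U V W : Obj C} (χ : Hom U V) (ψ : Hom V W)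
    (h : χ ∈ nullHomotopic U V) : χ.comp ψ ∈ nullHomotopic U W := by
  obtain ⟨s₁, s₀, h1, h2, h3⟩ := h
  refine ⟨s₁ ≫ ψ.a, s₀ ≫ ψ.b, ?_, ?_, ?_⟩
  · simp [h1]
  · simp only [Hom.comp_b, h2, Preadditive.add_comp, Category.assoc, ψ.comm₁]
  · simp only [Hom.comp_c, h3, Category.assoc, ψ.comm₂]

lemma null_comp {U V W : Obj C} (φ : Hom U V) (χ : Hom V W)
    (h : χ ∈ nullHomotopic V W) : φ.comp χ ∈ nullHomotopic U W := by
  obtain ⟨s₁, s₀, h1, h2, h3⟩ := h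
  refine ⟨φ.b ≫ s₁, φ.c ≫ s₀, ?_, ?_, ?_⟩
  · simp only [Hom.comp_a, h1, ← Category.assoc, φ.comm₁]
  · simp only [Hom.comp_b, h2, Preadditive.comp_add, ← Category.assoc, φ.comm₂]
  · simp [h3]

instance instCategory : Category (Obj C) where
  Hom V W := Hom V W ⧸ nullHomotopic V W
  id V := QuotientAddGroup.mk (Hom.id V)
  comp := Quotient.map₂ Hom.comp (by
    intro φ φ' hφ ψ ψ' hψ
    replace hφ := QuotientAddGroup.leftRel_apply.mp hφ
    replace hψ := QuotientAddGroup.leftRel_apply.mp hψ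
    refine QuotientAddGroup.leftRel_apply.mpr ?_
    have : -φ.comp ψ + φ'.comp ψ' = (-φ + φ').comp ψ' + φ.comp (-ψ + ψ') := by
      refine Hom.ext ?_ ?_ ?_ <;>
        simp [Hom.comp, Preadditive.add_comp, Preadditive.comp_add,
          Preadditive.neg_comp, Preadditive.comp_neg] <;> abel
    rw [this]
    exact AddSubgroup.add_mem _ (comp_null _ _ hφ) (null_comp _ _ hψ))
  id_comp := by
    rintro V W ⟨φ⟩
    exact congrArg (QuotientAddGroup.mk)
      (Hom.ext (by simp [Hom.comp, Hom.id]) (by simp [Hom.comp, Hom.id])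
        (by simp [Hom.comp, Hom.id]))
  comp_id := by
    rintro V W ⟨φ⟩
    exact congrArg (QuotientAddGroup.mk)
      (Hom.ext (by simp [Hom.comp, Hom.id]) (by simp [Hom.comp, Hom.id])
        (by simp [Hom.comp, Hom.id]))
  assoc := by
    rintro U V W X ⟨φ⟩ ⟨ψ⟩ ⟨ρ⟩
    exact congrArg (QuotientAddGroup.mk)
      (Hom.ext (by simp [Hom.comp]) (by simp [Hom.comp]) (by simp [Hom.comp]))

/-- The homotopy class of a chain map, as a morphism in the heart. -/
def mkHom {V W : Obj C} (φ : Hom V W) : V ⟶ W := QuotientAddGroup.mk φ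

lemma mkHom_surjective {V W : Obj C} : Function.Surjective (mkHom (V := V) (W := W)) :=
  fun q => Quotient.inductionOn q (fun φ => ⟨φ, rfl⟩)

@[simp] lemma mkHom_comp {U V W : Obj C} (φ : Hom U V) (ψ : Hom V W) :
    mkHom φ ≫ mkHom ψ = mkHom (φ.comp ψ) := rfl

instance homAddCommGroup (V W : Obj C) : AddCommGroup (V ⟶ W) :=
  inferInstanceAs (AddCommGroup (Hom V W ⧸ nullHomotopic V W))

lemma mkHom_add {V W : Obj C} (φ ψ : Hom V W) :
    (mkHom (φ + ψ) : V ⟶ W) = mkHom φ + mkHom ψ := rfl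

instance : Preadditive (Obj C) where
  homGroup := homAddCommGroup
  add_comp := by
    rintro U V W ⟨φ⟩ ⟨φ'⟩ ⟨ψ⟩
    show mkHom ((φ + φ').comp ψ) = mkHom ((φ.comp ψ) + (φ'.comp ψ))
    rw [Hom.add_comp]
  comp_add := by
    rintro U V W ⟨φ⟩ ⟨ψ⟩ ⟨ψ'⟩
    show mkHom (φ.comp (ψ + ψ')) = mkHom ((φ.comp ψ) + (φ.comp ψ'))
    rw [Hom.comp_add]

open ZeroObject in
/-- The object `P_X = [0 ⟶ 0 ⟶ X]`. -/
noncomputable def P (X : C) : Obj C where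
  A := 0
  B := 0
  Z := X
  f := 0
  g := 0
  w := by simp
  mono := by infer_instance
  exact := ShortComplex.exact_of_isZero_X₂ _ (isZero_zero C)

/-- The functor `P : C ⥤ 𝒜`, `X ↦ [0 ⟶ 0 ⟶ X]`. -/
noncomputable def Pfunctor : C ⥤ Obj C where
  obj := P
  map {X Y} u := mkHom ⟨0, 0, u, by simp [P] <;> first | rfl | exact zero_comp.symm | exact comp_zero.symm | exact Subsingleton.elim _ _ | exact (isZero_zero C).eq_of_src _ _, by simp [P] <;> first | rfl | exact zero_comp.symm | exact comp_zero.symm | exact Subsingleton.elim _ _ | exact (isZero_zero C).eq_of_src _ _⟩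
  map_id X := congrArg QuotientAddGroup.mk
    (Hom.ext (by simp [Hom.id, P] <;> first | rfl | exact zero_comp.symm | exact comp_zero.symm | exact Subsingleton.elim _ _ | exact (isZero_zero C).eq_of_src _ _) (by simp [Hom.id, P] <;> first | rfl | exact zero_comp.symm | exact comp_zero.symm | exact Subsingleton.elim _ _ | exact (isZero_zero C).eq_of_src _ _) (by simp [Hom.id, P] <;> first | rfl | exact zero_comp.symm | exact comp_zero.symm | exact Subsingleton.elim _ _ | exact (isZero_zero C).eq_of_src _ _))
  map_comp {X Y Z} u v := congrArg QuotientAddGroup.mk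
    (Hom.ext (by simp [Hom.comp] <;> first | rfl | exact zero_comp.symm | exact comp_zero.symm | exact Subsingleton.elim _ _ | exact (isZero_zero C).eq_of_src _ _) (by simp [Hom.comp] <;> first | rfl | exact zero_comp.symm | exact comp_zero.symm | exact Subsingleton.elim _ _ | exact (isZero_zero C).eq_of_src _ _) (by simp [Hom.comp] <;> first | rfl | exact zero_comp.symm | exact comp_zero.symm | exact Subsingleton.elim _ _ | exact (isZero_zero C).eq_of_src _ _))

/-- The heart object `[Ker g ⟶ B ⟶ Z]` associated to a morphism `g : B ⟶ Z`. -/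
noncomputable def kernelObj {B Z : C} (g : B ⟶ Z) : Obj C where
  A := kernel g
  B := B
  Z := Z
  f := kernel.ι g
  g := g
  w := kernel.condition g
  mono := inferInstance
  exact := ShortComplex.exact_of_f_is_kernel _ (kernelIsKernel g)

section Aux

variable {C : Type*} [Category C] [Abelian C]

/-- The key extension lemma: if `V.B` and `V.Z` are injective, then any map `ψ : X ⟶ V`
extends along a mono `mkHom φ : X ⟶ Y`. -/
lemma key {X Y V : Obj C} (hB : Injective V.B) (hZ : Injective V.Z)
    (φ : Hom X Y) (hmono : Mono (mkHom φ)) (ψ : Hom X V) :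
    ∃ θ : Hom Y V, mkHom φ ≫ mkHom θ = mkHom ψ := by
  haveI := X.mono
  haveI := Y.mono
  haveI := V.mono
  haveI : Mono (ShortComplex.mk X.f X.g X.w).f := X.mono
  haveI : Mono (ShortComplex.mk Y.f Y.g Y.w).f := Y.mono
  haveI : Mono (ShortComplex.mk V.f V.g V.w).f := V.mono
  haveI := hB
  haveI := hZ
  have hXk : IsLimit (KernelFork.ofι X.f X.w) := X.exact.fIsKernel
  have hYk : IsLimit (KernelFork.ofι Y.f Y.w) := Y.exact.fIsKernel
  have hVk : IsLimit (KernelFork.ofι V.f V.w) := V.exact.fIsKernel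
  -- the "degree 0 cone map" and its kernel `T` (playing the role of a pullback)
  set d₀ : (X.Z ⊞ Y.B) ⟶ Y.Z := biprod.fst ≫ φ.c - biprod.snd ≫ Y.g with hd₀
  set t : kernel d₀ ⟶ X.Z ⊞ Y.B := kernel.ι d₀ with ht
  set p₁ : kernel d₀ ⟶ X.Z := t ≫ biprod.fst with hp₁
  set p₂ : kernel d₀ ⟶ Y.B := t ≫ biprod.snd with hp₂
  have hT : p₁ ≫ φ.c = p₂ ≫ Y.g := by
    have h : t ≫ (biprod.fst ≫ φ.c - biprod.snd ≫ Y.g) = 0 := kernel.condition d₀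
    rw [Preadditive.comp_sub, sub_eq_zero] at h
    show (t ≫ biprod.fst) ≫ φ.c = (t ≫ biprod.snd) ≫ Y.g
    rw [Category.assoc, Category.assoc]
    exact h
  -- the test object `U`
  set g₁ : pullback X.g p₁ ⟶ kernel d₀ := pullback.snd X.g p₁ with hg₁
  set U : Obj C := kernelObj g₁ with hU
  have hcond : pullback.fst X.g p₁ ≫ X.g = g₁ ≫ p₁ := pullback.condition
  obtain ⟨χa, hχa⟩ := KernelFork.IsLimit.lift' hXk (kernel.ι g₁ ≫ pullback.fst X.g p₁)
    (by rw [Category.assoc, hcond, ← Category.assoc, kernel.condition, zero_comp])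
  rw [Fork.ι_ofι] at hχa
  set χ : Hom U X :=
    ⟨χa, pullback.fst X.g p₁, p₁, hχa.symm, pullback.condition.symm⟩ with hχ
  -- `χ.comp φ` is null-homotopic
  obtain ⟨σ₁, hσ₁⟩ := KernelFork.IsLimit.lift' hYk
      (pullback.fst X.g p₁ ≫ φ.b - g₁ ≫ p₂) (by
    rw [Preadditive.sub_comp, Category.assoc, Category.assoc, ← φ.comm₂, ← hT]
    simp only [← Category.assoc]
    rw [hcond, sub_self])
  rw [Fork.ι_ofι] at hσ₁
  have hχφ : χ.comp φ ∈ nullHomotopic U Y := by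
    refine ⟨σ₁, p₂, ?_, ?_, ?_⟩
    · show χa ≫ φ.a = kernel.ι g₁ ≫ σ₁
      rw [← cancel_mono Y.f, Category.assoc, Category.assoc, hσ₁, ← φ.comm₁,
        Preadditive.comp_sub, ← Category.assoc (kernel.ι g₁) g₁ p₂,
        kernel.condition, zero_comp, sub_zero, ← Category.assoc, hχa, Category.assoc]
    · show pullback.fst X.g p₁ ≫ φ.b = g₁ ≫ p₂ + σ₁ ≫ Y.f
      rw [hσ₁]; abel
    · exact hT
  -- since `mkHom φ` is a mono, `χ` itself is null-homotopic
  have h1 : mkHom χ ≫ mkHom φ = 0 := by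
    rw [mkHom_comp]
    exact (QuotientAddGroup.eq_zero_iff _).mpr hχφ
  have h2 : mkHom χ = 0 := zero_of_comp_mono (mkHom φ) h1
  obtain ⟨τ₁, τ₀, ht1, ht2, ht3⟩ := (QuotientAddGroup.eq_zero_iff χ).mp h2
  change kernel d₀ ⟶ X.B at τ₀
  have hfac : p₁ = τ₀ ≫ X.g := ht3
  have hρ : p₁ ≫ ψ.c = (τ₀ ≫ ψ.b) ≫ V.g := by
    rw [hfac, Category.assoc, Category.assoc, ψ.comm₂]
  -- extend `τ₀ ≫ ψ.b` along the mono `t` using injectivity of `V.B`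
  obtain ⟨H, hH⟩ := Injective.factors (J := V.B) (τ₀ ≫ ψ.b) t
  set s₀ : X.Z ⟶ V.B := biprod.inl ≫ H with hs₀
  set θb : Y.B ⟶ V.B := biprod.inr ≫ H with hθb
  have hs : p₁ ≫ s₀ + p₂ ≫ θb = τ₀ ≫ ψ.b := by
    calc p₁ ≫ s₀ + p₂ ≫ θb
        = t ≫ (biprod.fst ≫ biprod.inl + biprod.snd ≫ biprod.inr) ≫ H := by
          show (t ≫ biprod.fst) ≫ (biprod.inl ≫ H) + (t ≫ biprod.snd) ≫ (biprod.inr ≫ H) = _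
          simp only [Preadditive.add_comp, Preadditive.comp_add, Category.assoc]
      _ = τ₀ ≫ ψ.b := by rw [biprod.total, Category.id_comp, hH]
  -- construct `θc` using injectivity of `V.Z`
  set u : (X.Z ⊞ Y.B) ⟶ V.Z :=
    biprod.fst ≫ (ψ.c - s₀ ≫ V.g) - biprod.snd ≫ (θb ≫ V.g) with hu
  have hku : kernel.ι d₀ ≫ u = 0 := by
    show t ≫ u = 0
    have h1 : t ≫ u = p₁ ≫ ψ.c - (p₁ ≫ s₀ + p₂ ≫ θb) ≫ V.g := by
      show t ≫ (biprod.fst ≫ (ψ.c - s₀ ≫ V.g) - biprod.snd ≫ (θb ≫ V.g)) =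
        (t ≫ biprod.fst) ≫ ψ.c -
          ((t ≫ biprod.fst) ≫ s₀ + (t ≫ biprod.snd) ≫ θb) ≫ V.g
      simp only [Preadditive.comp_sub, Preadditive.sub_comp, Preadditive.add_comp,
        Category.assoc]
      abel
    rw [h1, hs, hρ, sub_self]
  obtain ⟨θc, hθc⟩ := Injective.factors (J := V.Z)
    (cokernel.desc (kernel.ι d₀) u hku) (Abelian.factorThruCoimage d₀)
  have hd : d₀ ≫ θc = u := by
    rw [← Abelian.coimage.fac d₀, Category.assoc, hθc]
    exact cokernel.π_desc _ _ _
  have hc1 : φ.c ≫ θc = ψ.c - s₀ ≫ V.g := by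
    have h := biprod.inl ≫= hd
    rw [hd₀, hu] at h
    simpa using h
  have hc2 : Y.g ≫ θc = θb ≫ V.g := by
    have h := biprod.inr ≫= hd
    rw [hd₀, hu] at h
    simpa using h
  -- the remaining components of `θ` and of the homotopy
  obtain ⟨s₁, hs₁⟩ := KernelFork.IsLimit.lift' hVk (ψ.b - φ.b ≫ θb - X.g ≫ s₀) (by
    have e2 : (φ.b ≫ θb) ≫ V.g = X.g ≫ (ψ.c - s₀ ≫ V.g) := by
      rw [Category.assoc, ← hc2, ← Category.assoc, ← φ.comm₂, Category.assoc, hc1]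
    rw [Preadditive.sub_comp, Preadditive.sub_comp, e2, ← ψ.comm₂, Category.assoc,
      Preadditive.comp_sub]
    simp only [hs₀, hθb, Category.assoc]
    abel)
  rw [Fork.ι_ofι] at hs₁
  obtain ⟨s₁, hs₁⟩ : ∃ r : X.B ⟶ V.A, r ≫ V.f = ψ.b - φ.b ≫ θb - X.g ≫ s₀ := ⟨s₁, hs₁⟩
  obtain ⟨θa, hθa⟩ := KernelFork.IsLimit.lift' hVk (Y.f ≫ θb) (by
    rw [Category.assoc, ← hc2, ← Category.assoc, Y.w, zero_comp])
  rw [Fork.ι_ofι] at hθa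
  obtain ⟨θa, hθa⟩ : ∃ r : Y.A ⟶ V.A, r ≫ V.f = Y.f ≫ θb := ⟨θa, hθa⟩
  set θ : Hom Y V := ⟨θa, θb, θc, hθa.symm, hc2⟩ with hθ
  have hmem : ψ - φ.comp θ ∈ nullHomotopic X V := by
    refine ⟨s₁, s₀, ?_, ?_, ?_⟩
    · show ψ.a - φ.a ≫ θa = X.f ≫ s₁
      rw [← cancel_mono V.f, Preadditive.sub_comp, Category.assoc, hθa,
        Category.assoc, hs₁, ← ψ.comm₁, ← Category.assoc φ.a Y.f θb, ← φ.comm₁]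
      have hw : X.f ≫ X.g ≫ s₀ = 0 := by rw [← Category.assoc, X.w, zero_comp]
      simp only [Preadditive.comp_sub, Category.assoc, hw, sub_zero]
    · show ψ.b - φ.b ≫ θb = X.g ≫ s₀ + s₁ ≫ V.f
      rw [hs₁]; abel
    · show ψ.c - φ.c ≫ θc = s₀ ≫ V.g
      rw [hc1]; abel
  refine ⟨θ, ?_⟩
  rw [mkHom_comp]
  exact QuotientAddGroup.eq.mpr (by rw [neg_add_eq_sub]; exact hmem)

/-- Heart objects with injective middle and right entries are injective. -/
lemma injective_of_injective (V : Obj C) (hB : Injective V.B) (hZ : Injective V.Z) :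
    Injective V := by
  constructor
  intro Xq Yq g f hf
  obtain ⟨φ, rfl⟩ := mkHom_surjective f
  obtain ⟨ψ, rfl⟩ := mkHom_surjective g
  obtain ⟨θ, hθ⟩ := key hB hZ φ hf ψ
  exact ⟨mkHom θ, hθ⟩

end Aux

end ARHeart

open CategoryTheory Limits ARHeart in
/-- if `I` and `J` are injective in `C`, then every heart object of the
form `[D ⟶ I ⟶ J]` is injective in the heart `𝒜`; in particular `P_I = [0 ⟶ 0 ⟶ I]`
is injective in `𝒜` for `I` injective. -/
theorem stmt9 {C : Type*} [Category C] [Abelian C] [EnoughInjectives C] :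
    (∀ V : ARHeart.Obj C, Injective V.B → Injective V.Z → Injective V) ∧
    (∀ I : C, Injective I → Injective (ARHeart.P I)) := by
  have h0 : ∀ Z : C, IsZero Z → Injective Z := by
    intro Z hZ
    constructor
    intro A B g f hf
    exact ⟨0, hZ.eq_of_tgt _ _⟩
  exact ⟨fun V hB hZ => injective_of_injective V hB hZ,
    fun I hI => injective_of_injective (P I) (h0 _ (isZero_zero C)) hI⟩
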